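/- arXiv:1801.02564 — 5 statements merged into one kernel-verified Lean document; each statement's English description precedes it below -/
import Mathlib

section
/- Let G be a topological group, Λ ⊆ I ⊆ G, and 𝔍, F ⊆ C(G,𝕋) (continuous circle-valued functions). Suppose (1) for every a ∈ I there exists x_a ∈ Λ such that for all ψ ∈ F, the angular distance d_a(ψ(x_a), ψ(a)) < ε, and (2) every φ ∈ 𝔍 can be written φ = ψ·κ with ψ ∈ F and κ ∈ C(G,𝕋) satisfying d_a(κ(t),1) < ε for all t ∈ I. Then for every f in the closure A_𝔍(G) = {Σ α_φ φ : Σ|α_φ| < ∞, φ ∈ 𝔍}, one has sup_{t∈I} |f(t)| ≤ (6π+2)·ε·Σ|α_φ| + sup_{x∈Λ} |f(x)|. -/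
/-!
Given `t ∈ I`, pick a matching `x ∈ Λ`. For `φ = ψ + κ` the triangle inequality on the circle
gives `d(φ t, φ x) ≤ d(ψ t, ψ x) + d(κ t, 0) + d(κ x, 0) < 3ε`, and `e^{2πi(·)}` is
`2π`-Lipschitz, so every term of `f t - f x` is at most `6πε·|α_φ|`.
Hence `|f t| ≤ |f x| + 6πε·Σ|α_φ|`.
-/

namespace AddCircle

theorem norm_toCircle_sub_one_le {T : ℝ} (u : AddCircle T) :
    ‖(toCircle u : ℂ) - 1‖ ≤ 2 * Real.pi / |T| * ‖u‖ := by
  induction u using QuotientAddGroup.induction_on with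
  | H x =>
    set y := x - round (T⁻¹ * x) * T
    have hy : (y : AddCircle T) = x := by
      rw [coe_sub, sub_eq_self, ← zsmul_eq_mul, coe_zsmul, coe_period, smul_zero]
    calc ‖(toCircle (x : AddCircle T) : ℂ) - 1‖
        = ‖Complex.exp (Complex.I * ↑(2 * Real.pi / T * y)) - 1‖ := by
          rw [← hy, toCircle_apply_mk, Circle.coe_exp, mul_comm]
      _ ≤ ‖2 * Real.pi / T * y‖ := Real.norm_exp_I_mul_ofReal_sub_one_le
      _ = 2 * Real.pi / |T| * ‖(x : AddCircle T)‖ := by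
          rw [norm_eq, Real.norm_eq_abs, abs_mul, abs_div, abs_of_pos Real.two_pi_pos]

theorem norm_toCircle_sub_toCircle_le {T : ℝ} (u v : AddCircle T) :
    ‖(toCircle u : ℂ) - toCircle v‖ ≤ 2 * Real.pi / |T| * dist u v := by
  have : (toCircle u : ℂ) - toCircle v = toCircle v * ((toCircle (u - v) : ℂ) - 1) := by
    rw [mul_sub, mul_one, ← Circle.coe_mul, ← toCircle_add, add_sub_cancel]
  rw [this, norm_mul, Circle.norm_coe, one_mul, dist_eq_norm]
  exact norm_toCircle_sub_one_le _

end AddCircle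

theorem norm_tsum_mul_sub_tsum_mul_le {ι R : Type*} [NormedRing R] [CompleteSpace R]
    {α u v : ι → R} {M C : ℝ} (hα : Summable fun i => ‖α i‖) (hu : ∀ i, ‖u i‖ ≤ M)
    (hv : ∀ i, ‖v i‖ ≤ M) (huv : ∀ i, ‖u i - v i‖ ≤ C) :
    ‖∑' i, α i * u i - ∑' i, α i * v i‖ ≤ C * ∑' i, ‖α i‖ := by
  have summable_mul {w : ι → R} (hw : ∀ i, ‖w i‖ ≤ M) : Summable fun i => α i * w i :=
    .of_norm_bounded (hα.mul_right M) fun i =>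
      (norm_mul_le _ _).trans (by gcongr; exact hw i)
  rw [← (summable_mul hu).tsum_sub (summable_mul hv), mul_comm]
  refine tsum_of_norm_bounded (hα.hasSum.mul_right C) fun i => ?_
  rw [← mul_sub]
  exact (norm_mul_le _ _).trans (by gcongr; exact huv i)

theorem matching_is_sampling_general {G : Type*} [TopologicalSpace G]
    (I Λ : Set G) (hΛI : Λ ⊆ I)
    (𝔍 F : Set (G → AddCircle (1 : ℝ)))
    (ε : ℝ)
    (hmatch : ∀ a ∈ I, ∃ x ∈ Λ, ∀ ψ ∈ F, dist (ψ x) (ψ a) < ε)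
    (hfact : ∀ φ ∈ 𝔍, ∃ ψ ∈ F, ∃ κ : G → AddCircle (1 : ℝ), Continuous κ ∧
      (∀ t ∈ I, dist (κ t) 0 < ε) ∧ ∀ t, φ t = ψ t + κ t)
    (α : (G → AddCircle (1 : ℝ)) → ℂ)
    (hsum : Summable fun φ : 𝔍 => ‖α (φ : G → AddCircle (1 : ℝ))‖)
    (f : G → ℂ)
    (hf : ∀ t, f t = ∑' φ : 𝔍, α (φ : G → AddCircle (1 : ℝ)) *
      (AddCircle.toCircle ((φ : G → AddCircle (1 : ℝ)) t) : ℂ))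
    (B : ℝ) (hB : ∀ x ∈ Λ, ‖f x‖ ≤ B) :
    ∀ t ∈ I, ‖f t‖ ≤ (6 * Real.pi + 2) * ε *
      (∑' φ : 𝔍, ‖α (φ : G → AddCircle (1 : ℝ))‖) + B := by
  intro t ht
  obtain ⟨x, hxΛ, hx⟩ := hmatch t ht
  have hterm (φ : 𝔍) : ‖(AddCircle.toCircle ((φ : G → AddCircle (1 : ℝ)) t) : ℂ) -
      AddCircle.toCircle ((φ : G → AddCircle (1 : ℝ)) x)‖ ≤ (6 * Real.pi + 2) * ε := by
    obtain ⟨φ, hφ⟩ := φ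
    obtain ⟨ψ, hψ, κ, -, hκ, hφψκ⟩ := hfact φ hφ
    have hκt := hκ t ht
    have hdist : dist (φ t) (φ x) < 3 * ε := calc
      dist (φ t) (φ x) ≤ dist (ψ t) (ψ x) + dist (κ t) (κ x) := by
        rw [hφψκ, hφψκ]; exact dist_add_add_le _ _ _ _
      _ ≤ dist (ψ x) (ψ t) + (dist (κ t) 0 + dist (κ x) 0) := by
        rw [dist_comm (ψ t)]; gcongr; exact dist_triangle_right _ _ _
      _ < 3 * ε := by linarith [hx ψ hψ, hκ x (hΛI hxΛ)]
    have hε : 0 < ε := dist_nonneg.trans_lt hκt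
    calc _ ≤ 2 * Real.pi / |1| * dist (φ t) (φ x) := AddCircle.norm_toCircle_sub_toCircle_le _ _
      _ ≤ (6 * Real.pi + 2) * ε := by
        rw [abs_one, div_one]; nlinarith [Real.pi_pos]
  calc ‖f t‖ ≤ ‖f t - f x‖ + ‖f x‖ := norm_le_norm_sub_add _ _
    _ ≤ (6 * Real.pi + 2) * ε * (∑' φ : 𝔍, ‖α (φ : G → AddCircle (1 : ℝ))‖) + B := by
      refine add_le_add ?_ (hB x hxΛ)
      rw [hf t, hf x]
      exact norm_tsum_mul_sub_tsum_mul_le hsum (fun _ => (Circle.norm_coe _).le)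
        (fun _ => (Circle.norm_coe _).le) hterm

/-- Matching sets, slightly thickened, are sampling sets: if `Λ ⊆ I` is an
`(F,I,ε)`-matching set and every `φ ∈ 𝔍` factors as `ψ·κ` with `ψ ∈ F` and
`κ` sending `I` into the `ε`-ball around `1`, then every
`f = Σ_{φ∈𝔍} α_φ·φ ∈ A_𝔍(G)` satisfies
`sup_I |f| ≤ (6π+2)·ε·Σ|α_φ| + sup_Λ |f|`.
The circle `𝕋` is modelled as `AddCircle 1`, whose metric is the angular
distance, and `AddCircle.toCircle` realizes `e^{2πi(·)}`. -/
theorem matching_is_sampling {G : Type*} [Group G] [TopologicalSpace G]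
    [IsTopologicalGroup G]
    (I Λ : Set G) (hΛI : Λ ⊆ I)
    (𝔍 F : Set (G → AddCircle (1 : ℝ)))
    (h𝔍cont : ∀ φ ∈ 𝔍, Continuous φ) (hFcont : ∀ ψ ∈ F, Continuous ψ)
    (ε : ℝ) (hε : 0 < ε)
    (hmatch : ∀ a ∈ I, ∃ x ∈ Λ, ∀ ψ ∈ F, dist (ψ x) (ψ a) < ε)
    (hfact : ∀ φ ∈ 𝔍, ∃ ψ ∈ F, ∃ κ : G → AddCircle (1 : ℝ), Continuous κ ∧
      (∀ t ∈ I, dist (κ t) 0 < ε) ∧ ∀ t, φ t = ψ t + κ t)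
    (α : (G → AddCircle (1 : ℝ)) → ℂ) (hsupp : ∀ φ, α φ ≠ 0 → φ ∈ 𝔍)
    (hsum : Summable fun φ : 𝔍 => ‖α (φ : G → AddCircle (1 : ℝ))‖)
    (f : G → ℂ)
    (hf : ∀ t, f t = ∑' φ : 𝔍, α (φ : G → AddCircle (1 : ℝ)) *
      (AddCircle.toCircle ((φ : G → AddCircle (1 : ℝ)) t) : ℂ))
    (B : ℝ) (hB : ∀ x ∈ Λ, ‖f x‖ ≤ B) :
    ∀ t ∈ I, ‖f t‖ ≤ (6 * Real.pi + 2) * ε *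
      (∑' φ : 𝔍, ‖α (φ : G → AddCircle (1 : ℝ))‖) + B :=
  matching_is_sampling_general I Λ hΛI 𝔍 F ε hmatch hfact α hsum f hf B hB
end

section
/- Let G be an abelian topological group and Λ ⊆ G. Suppose that for every finite set F of continuous characters of G and every ε > 0, Λ is an (F,G,ε)-matching set, i.e., for every a ∈ G there exists x_a ∈ Λ with d_a(χ(x_a), χ(a)) < ε for all χ ∈ F. Then Λ is a set of uniqueness for the almost periodic functions AP(G): if f ∈ AP(G) vanishes on Λ, then f = 0. -/
/-!
Take `a ∈ G` and `δ > 0`, and a trigonometric polynomial `P = ∑ αᵢ χᵢ` within `δ` of `f`.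
`P` only depends on the finitely many values `χᵢ(·)`, and `e^{2πi(·)}` is uniformly continuous
on the compact circle, so a point `x ∈ Λ` matching `a` for the characters `χᵢ` closely enough
has `|P x - P a| ≤ δ`. As `f x = 0`, this gives `|f a| ≤ 3δ`.
-/

open Finset

theorem norm_sum_mul_sub_sum_mul_le {ι R : Type*} [NonUnitalSeminormedRing R] (s : Finset ι)
    (α u v : ι → R) {η : ℝ} (h : ∀ i ∈ s, ‖u i - v i‖ ≤ η) :
    ‖∑ i ∈ s, α i * u i - ∑ i ∈ s, α i * v i‖ ≤ (∑ i ∈ s, ‖α i‖) * η := by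
  rw [← sum_sub_distrib, sum_mul]
  refine (norm_sum_le _ _).trans (sum_le_sum fun i hi => ?_)
  rw [← mul_sub]
  exact (norm_mul_le _ _).trans (mul_le_mul_of_nonneg_left (h i hi) (norm_nonneg _))

theorem exists_pos_norm_trigPoly_sub_le {G : Type*} [AddCommGroup G] {n : ℕ} (α : Fin n → ℂ)
    (χ : Fin n → G →+ AddCircle (1 : ℝ)) {η : ℝ} (hη : 0 < η) :
    ∃ ε > 0, ∀ x a : G, (∀ i, dist (χ i x) (χ i a) < ε) →
      ‖∑ i, α i * (AddCircle.toCircle (χ i x) : ℂ) -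
        ∑ i, α i * (AddCircle.toCircle (χ i a) : ℂ)‖ ≤ η := by
  set S := ∑ i, ‖α i‖
  have hS : 0 < S + 1 := by positivity
  have hUC : UniformContinuous fun z : AddCircle (1 : ℝ) => (AddCircle.toCircle z : ℂ) :=
    CompactSpace.uniformContinuous_of_continuous
      (continuous_subtype_val.comp AddCircle.continuous_toCircle)
  obtain ⟨ε, hε, hball⟩ := Metric.uniformContinuous_iff.mp hUC (η / (S + 1)) (div_pos hη hS)
  refine ⟨ε, hε, fun x a hxa => ?_⟩
  calc _ ≤ S * (η / (S + 1)) :=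
        norm_sum_mul_sub_sum_mul_le _ _ _ _ fun i _ => by
          simpa only [dist_eq_norm] using (hball (hxa i)).le
    _ ≤ (S + 1) * (η / (S + 1)) := by gcongr; linarith
    _ = η := mul_div_cancel₀ η hS.ne'

theorem eq_zero_of_forall_approx_matching {X E : Type*} [NormedAddCommGroup E]
    {Λ : Set X} {f : X → E} (hvanish : ∀ x ∈ Λ, f x = 0) {a : X}
    (happrox : ∀ δ > 0, ∃ p : X → E, (∀ y, ‖f y - p y‖ ≤ δ) ∧ ∃ x ∈ Λ, ‖p x - p a‖ ≤ δ) :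
    f a = 0 := by
  refine norm_le_zero_iff.mp (le_of_forall_pos_le_add fun δ hδ => ?_)
  obtain ⟨p, hfp, x, hxΛ, hpx⟩ := happrox (δ / 3) (by positivity)
  have hpx0 : ‖p x‖ ≤ δ / 3 := by simpa [hvanish x hxΛ] using hfp x
  calc ‖f a‖ = ‖(f a - p a) + (p a - p x) + p x‖ := by rw [sub_add_sub_cancel, sub_add_cancel]
    _ ≤ ‖f a - p a‖ + ‖p a - p x‖ + ‖p x‖ := norm_add₃_le
    _ ≤ δ / 3 + δ / 3 + δ / 3 := by gcongr; exacts [hfp a, norm_sub_rev (p a) (p x) ▸ hpx]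
    _ = 0 + δ := by ring

theorem matching_implies_uniqueness_AP_general {G : Type*} [AddCommGroup G]
    [TopologicalSpace G] (Λ : Set G)
    (hmatch : ∀ (F : Finset {χ : G →+ AddCircle (1 : ℝ) // Continuous χ}) (ε : ℝ),
      0 < ε → ∀ a : G, ∃ x ∈ Λ, ∀ χ ∈ F, dist (χ.1 x) (χ.1 a) < ε)
    (f : G → ℂ)
    (hf : ∀ δ : ℝ, 0 < δ → ∃ (n : ℕ) (α : Fin n → ℂ)
      (χ : Fin n → G →+ AddCircle (1 : ℝ)), (∀ i, Continuous (χ i)) ∧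
      ∀ g : G, ‖f g - ∑ i, α i * (AddCircle.toCircle (χ i g) : ℂ)‖ ≤ δ)
    (hvanish : ∀ x ∈ Λ, f x = 0) :
    ∀ g : G, f g = 0 := by
  classical
  intro a
  refine eq_zero_of_forall_approx_matching hvanish fun δ hδ => ?_
  obtain ⟨n, α, χ, hχ, hfχ⟩ := hf δ hδ
  obtain ⟨ε, hε, hclose⟩ := exists_pos_norm_trigPoly_sub_le α χ hδ
  obtain ⟨x, hxΛ, hxa⟩ := hmatch (univ.image fun i => ⟨χ i, hχ i⟩) ε hε a
  have hmatched : ∀ i, dist (χ i x) (χ i a) < ε := fun i =>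
    hxa ⟨χ i, hχ i⟩ (mem_image_of_mem _ (mem_univ i))
  exact ⟨fun g => ∑ i, α i * (AddCircle.toCircle (χ i g) : ℂ), hfχ, x, hxΛ, hclose x a hmatched⟩

/-- If `Λ ⊆ G` is an `(F,G,ε)`-matching set for every finite set `F` of continuous
characters and every `ε > 0`, then `Λ` is a set of uniqueness for the almost
periodic functions: any uniform limit of trigonometric polynomials vanishing on `Λ`
vanishes identically. Characters are modelled as continuous additive homomorphisms
`G →+ AddCircle 1`, and `AddCircle.toCircle` realizes `e^{2πi(·)} : 𝕋 → ℂ`. -/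
theorem matching_implies_uniqueness_AP {G : Type*} [AddCommGroup G]
    [TopologicalSpace G] [IsTopologicalAddGroup G] (Λ : Set G)
    (hmatch : ∀ (F : Finset {χ : G →+ AddCircle (1 : ℝ) // Continuous χ}) (ε : ℝ),
      0 < ε → ∀ a : G, ∃ x ∈ Λ, ∀ χ ∈ F, dist (χ.1 x) (χ.1 a) < ε)
    (f : G → ℂ)
    (hf : ∀ δ : ℝ, 0 < δ → ∃ (n : ℕ) (α : Fin n → ℂ)
      (χ : Fin n → G →+ AddCircle (1 : ℝ)), (∀ i, Continuous (χ i)) ∧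
      ∀ g : G, ‖f g - ∑ i, α i * (AddCircle.toCircle (χ i g) : ℂ)‖ ≤ δ)
    (hvanish : ∀ x ∈ Λ, f x = 0) :
    ∀ g : G, f g = 0 :=
  matching_implies_uniqueness_AP_general Λ hmatch f hf hvanish
end

section
/- Let ε ∈ (0,1), n ∈ ℕ, and suppose (ℓ_k)_{k∈ℕ} and (L_k)_{k∈ℕ} are sequences of positive integers such that for some γ > 0 and k₀ ∈ ℕ, for all k ≥ k₀: −n·log(L_k)/ε^n + ℓ_k > −(1+γ)·log(k)/log(1−ε^n). Then the series Σ_k (L_k·e/n)^n · (1−ε^n)^{ℓ_k} converges. -/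
/-!
Write `q = 1 - εⁿ`. Since `log q < -εⁿ`, multiplying the hypothesis by `log q < 0` gives
`n log L_k + ℓ_k log q < -(1 + γ) log k`, i.e. `L_kⁿ q^{ℓ_k} ≤ k^{-(1+γ)}`. Hence the general term
is at most `(e/n)ⁿ k^{-(1+γ)}`, a convergent `p`-series because `1 + γ > 1`.
-/

open Real Filter

namespace Real

lemma log_one_sub_lt_neg {s : ℝ} (hs0 : 0 < s) (hs1 : s < 1) : log (1 - s) < -s := by
  have := log_lt_sub_one_of_pos (by linarith : 0 < 1 - s) (by linarith : 1 - s ≠ 1)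
  linarith

/-- Equality for `0 < x`; for `x = 0` the right side is `exp 0 = 1`, since `log 0 = 0`. -/
lemma pow_le_exp_mul_log {x : ℝ} (hx : 0 ≤ x) (n : ℕ) : x ^ n ≤ exp (n * log x) := by
  rcases hx.eq_or_lt with rfl | hx
  · rcases n with _ | n <;> simp
  · rw [← log_pow, exp_log (pow_pos hx n)]

lemma pow_mul_pow_le_exp {x q : ℝ} (hx : 0 ≤ x) (hq : 0 < q) (n m : ℕ) :
    x ^ n * q ^ m ≤ exp (n * log x + m * log q) := by
  rw [exp_add, ← log_pow q, exp_log (pow_pos hq m)]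
  exact mul_le_mul_of_nonneg_right (pow_le_exp_mul_log hx n) (pow_pos hq m).le

/-- The factor `-log (1 - s) / s > 1` lets the `-a / s` term absorb `a`. -/
lemma add_mul_log_one_sub_lt {s a b c : ℝ} (hs0 : 0 < s) (hs1 : s < 1) (ha : 0 ≤ a)
    (h : -a / s + b > c / log (1 - s)) : a + b * log (1 - s) < c := by
  have hlog := log_one_sub_lt_neg hs0 hs1
  have hneg : log (1 - s) < 0 := by linarith
  have hc : (-a / s + b) * log (1 - s) < c := by
    simpa [div_mul_cancel₀ c hneg.ne] using mul_lt_mul_of_neg_right h hneg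
  have habsorb : a ≤ -a / s * log (1 - s) := by
    rw [neg_div, neg_mul, ← mul_neg, div_mul_eq_mul_div, le_div_iff₀ hs0]
    exact mul_le_mul_of_nonneg_left (by linarith) ha
  linarith

end Real

theorem summable_borel_cantelli_bound_general (ε : ℝ) (hε0 : 0 < ε) (hε1 : ε < 1) (n : ℕ)
    (ℓ L : ℕ → ℕ) (hℓ : ∀ k, 0 < ℓ k)
    (γ : ℝ) (hγ : 0 < γ) (k₀ : ℕ)
    (h : ∀ k ≥ k₀, -((n : ℝ) * Real.log (L k)) / ε ^ n + ℓ k >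
      -((1 + γ) * Real.log k) / Real.log (1 - ε ^ n)) :
    Summable fun k : ℕ => ((L k : ℝ) * Real.exp 1 / n) ^ n * (1 - ε ^ n) ^ ℓ k := by
  rcases Nat.eq_zero_or_pos n with rfl | hn
  · simp [zero_pow (hℓ _).ne']
  have hs0 : 0 < ε ^ n := pow_pos hε0 n
  have hs1 : ε ^ n < 1 := pow_lt_one₀ hε0.le hε1 hn.ne'
  refine Summable.of_norm_bounded_eventually_nat
    ((summable_nat_rpow.mpr (by linarith : -(1 + γ) < -1)).mul_left ((exp 1 / n) ^ n)) ?_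
  filter_upwards [eventually_ge_atTop (max k₀ 1)] with k hk
  have hq : 0 < 1 - ε ^ n := by linarith
  have hk0 : (0 : ℝ) < k := by exact_mod_cast (le_of_max_le_right hk)
  have hexponent := add_mul_log_one_sub_lt hs0 hs1
    (mul_nonneg n.cast_nonneg (log_natCast_nonneg _)) (h k (le_of_max_le_left hk))
  have hsplit : ((L k : ℝ) * exp 1 / n) ^ n * (1 - ε ^ n) ^ ℓ k
      = (exp 1 / n) ^ n * ((L k : ℝ) ^ n * (1 - ε ^ n) ^ ℓ k) := by ring
  rw [hsplit, norm_of_nonneg (by positivity)]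
  gcongr
  calc (L k : ℝ) ^ n * (1 - ε ^ n) ^ ℓ k
      ≤ exp (n * log (L k) + ℓ k * log (1 - ε ^ n)) :=
        pow_mul_pow_le_exp (Nat.cast_nonneg _) hq n (ℓ k)
    _ ≤ exp (log k * -(1 + γ)) := exp_le_exp.mpr (by linarith)
    _ = (k : ℝ) ^ (-(1 + γ)) := (rpow_def_of_pos hk0 _).symm

/-- Key convergence estimate in the Borel–Cantelli argument: if for some `γ > 0` and
`k₀`, for all `k ≥ k₀` one has `−n·log(L_k)/ε^n + ℓ_k > −(1+γ)·log k / log(1−ε^n)`,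
then `Σ_k (L_k·e/n)^n (1−ε^n)^{ℓ_k}` converges. -/
theorem summable_borel_cantelli_bound (ε : ℝ) (hε0 : 0 < ε) (hε1 : ε < 1) (n : ℕ)
    (ℓ L : ℕ → ℕ) (hℓ : ∀ k, 0 < ℓ k) (hL : ∀ k, 0 < L k)
    (γ : ℝ) (hγ : 0 < γ) (k₀ : ℕ)
    (h : ∀ k ≥ k₀, -((n : ℝ) * Real.log (L k)) / ε ^ n + ℓ k >
      -((1 + γ) * Real.log k) / Real.log (1 - ε ^ n)) :
    Summable fun k : ℕ => ((L k : ℝ) * Real.exp 1 / n) ^ n * (1 - ε ^ n) ^ ℓ k :=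
  summable_borel_cantelli_bound_general ε hε0 hε1 n ℓ L hℓ γ hγ k₀ h
end

section
/- Let p₁,…,p_{n−1} be positive integers and ε ∈ (0,1/2). Then ε·(∏_{k=1}^{n−1}(2⌊p_k ε⌋+1) + 1) ≥ 2·ε^n·p₁⋯p_{n−1}. -/
/-!
Write `f x = 2⌊x⌋ + 1`, so that `f x ≥ 1` and `f x ≥ 2x - 1` for `x ≥ 0`. For nonnegative reals
`x₁, …, x_m` the bound `2 ∏ xᵢ ≤ ∏ f xᵢ + 1` follows by induction on `m`: if `2P ≤ F + 1` with
`F ≥ 1`, then `2xP ≤ x(F + 1) ≤ f(x) F + 1`, the last step being `F + 1 ≤ F + 1` for `x < 1` and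
`(x - 1)(F - 1) ≥ 0` for `x ≥ 1`. Applying it to `xₖ = pₖ ε` and multiplying by `ε` gives the theorem.
-/

open Finset

lemma one_le_two_mul_floor_add_one {x : ℝ} (hx : 0 ≤ x) : 1 ≤ 2 * (⌊x⌋ : ℝ) + 1 := by
  have : (0 : ℝ) ≤ ⌊x⌋ := mod_cast Int.floor_nonneg.2 hx
  linarith

lemma two_mul_sub_one_le_two_mul_floor_add_one (x : ℝ) : 2 * x - 1 ≤ 2 * (⌊x⌋ : ℝ) + 1 := by
  linarith [Int.sub_one_lt_floor x]

lemma mul_add_one_le_two_mul_floor_add_one_mul_add_one {x F : ℝ} (hx : 0 ≤ x) (hF : 1 ≤ F) :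
    x * (F + 1) ≤ (2 * (⌊x⌋ : ℝ) + 1) * F + 1 := by
  rcases lt_or_ge x 1 with hx1 | hx1
  · nlinarith [one_le_two_mul_floor_add_one hx]
  · nlinarith [two_mul_sub_one_le_two_mul_floor_add_one x]

lemma two_mul_prod_le_prod_two_mul_floor_add_one_add_one {ι : Type*} (s : Finset ι)
    {x : ι → ℝ} (hx : ∀ i ∈ s, 0 ≤ x i) :
    2 * ∏ i ∈ s, x i ≤ ∏ i ∈ s, (2 * (⌊x i⌋ : ℝ) + 1) + 1 := by
  induction s using Finset.cons_induction with
  | empty => norm_num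
  | cons a s ha ih =>
    rw [forall_mem_cons] at hx
    have hF : 1 ≤ ∏ i ∈ s, (2 * (⌊x i⌋ : ℝ) + 1) :=
      one_le_prod fun i hi => one_le_two_mul_floor_add_one (hx.2 i hi)
    rw [prod_cons, prod_cons]
    calc 2 * (x a * ∏ i ∈ s, x i) = x a * (2 * ∏ i ∈ s, x i) := by ring
      _ ≤ x a * (∏ i ∈ s, (2 * (⌊x i⌋ : ℝ) + 1) + 1) :=
        mul_le_mul_of_nonneg_left (ih hx.2) hx.1
      _ ≤ _ := mul_add_one_le_two_mul_floor_add_one_mul_add_one hx.1 hF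

theorem floor_product_bound_general (n : ℕ) (hn : 1 ≤ n) (p : ℕ → ℕ)
    (ε : ℝ) (hε0 : 0 < ε) :
    2 * ε ^ n * ∏ k ∈ range (n - 1), (p k : ℝ) ≤
      ε * ((∏ k ∈ range (n - 1), (2 * (⌊(p k : ℝ) * ε⌋ : ℝ) + 1)) + 1) := by
  obtain ⟨m, rfl⟩ : ∃ m, n = m + 1 := ⟨n - 1, by omega⟩
  have key := two_mul_prod_le_prod_two_mul_floor_add_one_add_one (range m)
    (x := fun k => (p k : ℝ) * ε) fun k _ => by positivity
  rw [prod_mul_distrib, prod_const, card_range] at key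
  calc 2 * ε ^ (m + 1) * ∏ k ∈ range (m + 1 - 1), (p k : ℝ)
      = ε * (2 * ((∏ k ∈ range m, (p k : ℝ)) * ε ^ m)) := by rw [Nat.add_sub_cancel]; ring
    _ ≤ _ := mul_le_mul_of_nonneg_left key hε0.le

/-- For positive integers `p₁,…,p_{n−1}` and `ε ∈ (0,1/2)`,
`ε·(∏(2⌊p_k ε⌋+1) + 1) ≥ 2·ε^n·p₁⋯p_{n−1}`. -/
theorem floor_product_bound (n : ℕ) (hn : 1 ≤ n) (p : ℕ → ℕ)
    (hp : ∀ k < n - 1, 0 < p k) (ε : ℝ) (hε0 : 0 < ε) (hε : ε < 1 / 2) :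
    2 * ε ^ n * ∏ k ∈ range (n - 1), (p k : ℝ) ≤
      ε * ((∏ k ∈ range (n - 1), (2 * (⌊(p k : ℝ) * ε⌋ : ℝ) + 1)) + 1) :=
  floor_product_bound_general n hn p ε hε0
end

section
/- Let I_k = [z_k, z_k + N_k] ⊆ ℤ be intervals of integers such that the gaps (z_{k+1} − z_k − N_k) are increasing and unbounded, and let Λ_k ⊆ I_k be a uniformly random subset of size ℓ_k. If Σ_k ℓ_k²·N_{k−1}/N_k < ∞, then almost surely Λ = ⋃_k Λ_k is a t-set, i.e., for every nonzero integer t₀, Λ ∩ (Λ + t₀) is finite. -/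
/-!
Fix `t₀ ≠ 0`. A uniform `ℓ`-subset of an `(n + 1)`-point interval contains a given pair
`{x, x + t₀}` with probability `ℓ(ℓ-1)/(n(n+1))`, so by a union bound over the `n + 1` pairs it
contains some pair at distance `t₀` with probability at most `ℓ²/n`. As `N_{k-1} ≥ 1` these bounds
are summable, and Borel–Cantelli shows that almost surely, for every `t₀`, only finitely many
`Λ_k` contain such a pair. Deterministically, since the gaps increase to infinity, the distance
from a late block to every other block exceeds `|t₀|`, so a pair `x - t₀, x ∈ Λ` with `x` in a late
block lies in a single block. Hence `Λ ∩ (Λ + t₀)` is contained in finitely many blocks.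
-/

open MeasureTheory ProbabilityTheory Filter Finset
open scoped ENNReal

theorem exists_forall_le_sum_of_eventually_nonneg {M : Type*} [AddCommGroup M] [LinearOrder M]
    [IsOrderedAddMonoid M] {f : ℕ → M} (hf : ∀ᶠ i in atTop, 0 ≤ f i) :
    ∃ C, ∀ s : Finset ℕ, C ≤ ∑ i ∈ s, f i := by
  obtain ⟨K, hK⟩ := eventually_atTop.1 hf
  refine ⟨∑ i ∈ range K, min (f i) 0, fun s => ?_⟩
  calc ∑ i ∈ range K, min (f i) 0
      ≤ ∑ i ∈ s.filter (· < K), min (f i) 0 :=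
        sum_le_sum_of_subset_of_nonpos' (fun i hi => mem_range.2 (mem_filter.1 hi).2)
          fun i _ _ => min_le_right _ _
    _ ≤ ∑ i ∈ s.filter (· < K), f i := sum_le_sum fun i _ => min_le_left _ _
    _ ≤ ∑ i ∈ s, f i :=
        sum_le_sum_of_subset_of_nonneg (filter_subset _ _) fun i _ hi =>
          hK i (not_lt.1 fun h => hi (mem_filter.2 ⟨‹_›, h⟩))

section Intervals

variable {a b : ℕ → ℤ}

theorem sum_Ico_gap_le (hab : ∀ i, a i ≤ b i) {j k : ℕ} (hjk : j < k) :
    ∑ i ∈ Ico j k, (a (i + 1) - b i) ≤ a k - b j := by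
  induction k, hjk using Nat.le_induction with
  | base => simp
  | succ k hjk ih =>
    rw [sum_Ico_succ_top (Nat.le_of_succ_le hjk)]
    linarith [hab k]

theorem exists_forall_lt_sub_of_gap_unbounded (hab : ∀ i, a i ≤ b i)
    (hmono : Monotone fun i => a (i + 1) - b i) (hunbdd : ∀ C : ℤ, ∃ i, C < a (i + 1) - b i)
    (C : ℤ) : ∃ K, ∀ j k, j < k → K < k → C < a k - b j := by
  -- Early gaps may be negative (blocks may overlap), but partial sums of gaps are bounded below.
  obtain ⟨D, hD⟩ : ∃ D, ∀ s : Finset ℕ, D ≤ ∑ i ∈ s, (a (i + 1) - b i) := by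
    refine exists_forall_le_sum_of_eventually_nonneg ?_
    obtain ⟨K, hK⟩ := hunbdd 0
    exact eventually_atTop.2 ⟨K, fun i hi => (hK.trans_le (hmono hi)).le⟩
  obtain ⟨K, hK⟩ := hunbdd (C - D)
  refine ⟨K, fun j k hjk hKk => ?_⟩
  obtain ⟨m, rfl⟩ : ∃ m, k = m + 1 := ⟨k - 1, by omega⟩
  have hsum := sum_Ico_gap_le hab hjk
  rw [sum_Ico_succ_top (by omega : j ≤ m)] at hsum
  linarith [hD (Ico j m), hmono (show K ≤ m by omega)]

theorem finite_inter_image_add_of_eventually (hab : ∀ i, a i ≤ b i)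
    (hmono : Monotone fun i => a (i + 1) - b i) (hunbdd : ∀ C : ℤ, ∃ i, C < a (i + 1) - b i)
    {A : ℕ → Finset ℤ} (hA : ∀ k, A k ⊆ Icc (a k) (b k)) {t : ℤ}
    (ht : ∀ᶠ k in atTop, ¬∃ x ∈ A k, x + t ∈ A k) :
    ((⋃ k, (A k : Set ℤ)) ∩ ((· + t) '' ⋃ k, (A k : Set ℤ))).Finite := by
  obtain ⟨K, hK⟩ := eventually_atTop.1 ht
  obtain ⟨K', hK'⟩ := exists_forall_lt_sub_of_gap_unbounded hab hmono hunbdd |t|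
  refine ((Set.finite_Iio (max K (K' + 1))).biUnion fun k _ => (A k).finite_toSet).subset ?_
  rintro x ⟨hx, y, hy, rfl⟩
  obtain ⟨k, hk⟩ := Set.mem_iUnion.1 hx
  obtain ⟨j, hj⟩ := Set.mem_iUnion.1 hy
  refine Set.mem_biUnion (Set.mem_Iio.2 (not_le.1 fun hkM => ?_)) hk
  have hxk := mem_Icc.1 (hA k hk)
  have hyj := mem_Icc.1 (hA j hj)
  rcases lt_trichotomy j k with hjk | rfl | hkj
  · linarith [hK' j k hjk (by omega), le_abs_self t]
  · exact hK j (le_of_max_le_left hkM) ⟨y, hj, hk⟩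
  · linarith [hK' k j hkj (by omega), neg_abs_le t]

end Intervals

theorem Nat.mul_sub_one_mul_choose_sub_two (n : ℕ) {ℓ : ℕ} (hℓ : 2 ≤ ℓ) :
    n * (n - 1) * (n - 2).choose (ℓ - 2) = ℓ * (ℓ - 1) * n.choose ℓ := by
  obtain ⟨j, rfl⟩ := Nat.exists_eq_add_of_le' hℓ
  rcases Nat.lt_or_ge n 2 with hn | hn
  · interval_cases n <;> simp [Nat.choose_eq_zero_of_lt]
  obtain ⟨p, rfl⟩ := Nat.exists_eq_add_of_le' hn
  rw [show p + 2 - 1 = p + 1 by omega, show j + 2 - 1 = j + 1 by omega, Nat.add_sub_cancel,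
    Nat.add_sub_cancel, mul_assoc, Nat.add_one_mul_choose_eq, ← mul_assoc,
    Nat.add_one_mul_choose_eq]
  ring

theorem ae_eventually_notMem_of_le_ofReal {α : Type*} [MeasurableSpace α] {μ : Measure α}
    {s : ℕ → Set α} {f : ℕ → ℝ} (hf : Summable f) (hs : ∀ i, μ (s i) ≤ ENNReal.ofReal (f i)) :
    ∀ᵐ x ∂μ, ∀ᶠ i in atTop, x ∉ s i :=
  ae_eventually_notMem <| ne_top_of_le_ne_top
    (ENNReal.tsum_coe_ne_top_iff_summable.2 hf.toNNReal) (ENNReal.tsum_le_tsum hs)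

structure IsUniformRandomSubset {Ω α : Type*} [MeasurableSpace Ω] (P : Measure Ω)
    (Λ : Ω → Finset α) (I : Finset α) (ℓ : ℕ) : Prop where
  mem_powersetCard : ∀ ω, Λ ω ∈ I.powersetCard ℓ
  measure_eq : ∀ s ∈ I.powersetCard ℓ, P {ω | Λ ω = s} = ((#I).choose ℓ : ℝ≥0∞)⁻¹

namespace IsUniformRandomSubset

variable {Ω α : Type*} [MeasurableSpace Ω] [DecidableEq α] {P : Measure Ω} {Λ : Ω → Finset α}
  {I : Finset α} {ℓ : ℕ}

theorem measure_subset_le (h : IsUniformRandomSubset P Λ I ℓ) {s : Finset α} (hsI : s ⊆ I)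
    (hsℓ : #s ≤ ℓ) :
    P {ω | s ⊆ Λ ω} ≤ (#I - #s).choose (ℓ - #s) * ((#I).choose ℓ : ℝ≥0∞)⁻¹ := by
  set F := (I.powersetCard ℓ).filter (s ⊆ ·)
  calc P {ω | s ⊆ Λ ω} ≤ P (⋃ u ∈ F, {ω | Λ ω = u}) :=
        measure_mono fun ω hω => Set.mem_biUnion (mem_filter.2 ⟨h.mem_powersetCard ω, hω⟩) rfl
    _ ≤ ∑ u ∈ F, P {ω | Λ ω = u} := measure_biUnion_finset_le _ _
    _ = _ := by
        rw [sum_congr rfl fun u hu => h.measure_eq u (mem_filter.1 hu).1, sum_const,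
          card_filter_powersetCard_subset s I ℓ hsI hsℓ, nsmul_eq_mul]

theorem measure_exists_mem_add_mem_le [AddGroup α] (h : IsUniformRandomSubset P Λ I ℓ) {t : α}
    (ht : t ≠ 0) : P {ω | ∃ x ∈ Λ ω, x + t ∈ Λ ω} ≤ ℓ ^ 2 / (#I - 1 : ℕ) := by
  rcases Set.eq_empty_or_nonempty {ω | ∃ x ∈ Λ ω, x + t ∈ Λ ω} with hE | ⟨ω, x, hx, hxt⟩
  · simp [hE]
  have hpair : ∀ x : α, #{x, x + t} = 2 := fun x => card_pair (by simpa using ht)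
  obtain ⟨hΛI, hΛℓ⟩ := Finset.mem_powersetCard.1 (h.mem_powersetCard ω)
  have h2ℓ : 2 ≤ ℓ := hΛℓ ▸ hpair x ▸ card_le_card (insert_subset hx (singleton_subset_iff.2 hxt))
  have hℓI : ℓ ≤ #I := hΛℓ ▸ card_le_card hΛI
  set J := I.filter (· + t ∈ I)
  calc P {ω | ∃ x ∈ Λ ω, x + t ∈ Λ ω} ≤ P (⋃ x ∈ J, {ω | {x, x + t} ⊆ Λ ω}) := by
        refine measure_mono fun ω ⟨x, hx, hxt⟩ => ?_
        have hΛI := (Finset.mem_powersetCard.1 (h.mem_powersetCard ω)).1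
        exact Set.mem_biUnion (mem_filter.2 ⟨hΛI hx, hΛI hxt⟩)
          (insert_subset hx (singleton_subset_iff.2 hxt))
    _ ≤ ∑ x ∈ J, P {ω | {x, x + t} ⊆ Λ ω} := measure_biUnion_finset_le _ _
    _ ≤ ∑ _x ∈ J, ((#I - 2).choose (ℓ - 2) * ((#I).choose ℓ : ℝ≥0∞)⁻¹) := by
        refine sum_le_sum fun x hx => ?_
        have hxI := mem_filter.1 hx
        simpa only [hpair] using
          h.measure_subset_le (insert_subset hxI.1 (singleton_subset_iff.2 hxI.2)) (hpair x ▸ h2ℓ)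
    _ ≤ #I * ((#I - 2).choose (ℓ - 2) * ((#I).choose ℓ : ℝ≥0∞)⁻¹) := by
        rw [sum_const, nsmul_eq_mul]
        gcongr
        exact filter_subset _ _
    _ ≤ ℓ ^ 2 / (#I - 1 : ℕ) := by
        have hchoose : ((#I).choose ℓ : ℝ≥0∞) ≠ 0 := by simp [Nat.choose_eq_zero_iff, hℓI]
        rw [ENNReal.le_div_iff_mul_le (by simp; omega) (by simp), ← mul_assoc, mul_right_comm,
          ENNReal.mul_inv_le_iff hchoose (by simp)]
        have hnum : #I * (#I - 2).choose (ℓ - 2) * (#I - 1) ≤ ℓ ^ 2 * (#I).choose ℓ :=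
          calc #I * (#I - 2).choose (ℓ - 2) * (#I - 1)
              = ℓ * (ℓ - 1) * (#I).choose ℓ := by
                rw [← Nat.mul_sub_one_mul_choose_sub_two #I h2ℓ]; ring
            _ ≤ ℓ ^ 2 * (#I).choose ℓ := by rw [sq]; gcongr; exact Nat.sub_le _ _
        exact_mod_cast hnum

end IsUniformRandomSubset

theorem random_subsets_almost_surely_tset_general {Ω : Type*} [MeasurableSpace Ω]
    (P : Measure Ω)
    (z : ℕ → ℤ) (N ℓ : ℕ → ℕ) (hN : ∀ k, 0 < N k)
    (hgap_mono : Monotone fun k => z (k + 1) - (z k + (N k : ℤ)))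
    (hgap_unbdd : ∀ M : ℤ, ∃ k, M < z (k + 1) - (z k + (N k : ℤ)))
    (Λ : ℕ → Ω → Finset ℤ)
    (hrange : ∀ k (ω : Ω), Λ k ω ⊆ Finset.Icc (z k) (z k + (N k : ℤ)) ∧
      (Λ k ω).card = ℓ k)
    (hunif : ∀ k (s : Finset ℤ), s ⊆ Finset.Icc (z k) (z k + (N k : ℤ)) →
      s.card = ℓ k → P {ω | Λ k ω = s} = ((N k + 1).choose (ℓ k) : ℝ≥0∞)⁻¹)
    (hsum : Summable fun k : ℕ => ((ℓ k : ℝ)) ^ 2 * (N (k - 1) : ℝ) / (N k : ℝ)) :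
    ∀ᵐ ω ∂P, ∀ t₀ : ℤ, t₀ ≠ 0 →
      ((⋃ k, ((Λ k ω : Finset ℤ) : Set ℤ)) ∩
        ((· + t₀) '' ⋃ k, ((Λ k ω : Finset ℤ) : Set ℤ))).Finite := by
  have hcard (k : ℕ) : #(Icc (z k) (z k + N k)) = N k + 1 := by simp; omega
  have huniform (k : ℕ) : IsUniformRandomSubset P (Λ k) (Icc (z k) (z k + N k)) (ℓ k) :=
    ⟨fun ω => Finset.mem_powersetCard.2 (hrange k ω), fun s hs =>
      hcard k ▸ hunif k s (Finset.mem_powersetCard.1 hs).1 (Finset.mem_powersetCard.1 hs).2⟩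
  have hbad {t₀ : ℤ} (ht : t₀ ≠ 0) (k : ℕ) : P {ω | ∃ x ∈ Λ k ω, x + t₀ ∈ Λ k ω} ≤
      ENNReal.ofReal ((ℓ k : ℝ) ^ 2 * N (k - 1) / N k) := by
    refine ((huniform k).measure_exists_mem_add_mem_le ht).trans ?_
    rw [hcard, Nat.add_sub_cancel, ENNReal.ofReal_div_of_pos (by exact_mod_cast hN k)]
    norm_cast
    gcongr
    exact Nat.le_mul_of_pos_right _ (hN (k - 1))
  have hae (t₀ : ℤ) : ∀ᵐ ω ∂P, t₀ ≠ 0 → ∀ᶠ k in atTop, ¬∃ x ∈ Λ k ω, x + t₀ ∈ Λ k ω := by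
    rcases eq_or_ne t₀ 0 with rfl | ht
    · simp
    · filter_upwards [ae_eventually_notMem_of_le_ofReal hsum (hbad ht)] with ω hω _ using hω
  filter_upwards [ae_all_iff.2 hae] with ω hω t₀ ht
  exact finite_inter_image_add_of_eventually (fun k => le_add_of_nonneg_right (Nat.cast_nonneg _))
    hgap_mono hgap_unbdd (fun k => (hrange k ω).1) (hω t₀ ht)

/-- Random t-sets in `ℤ`: if `Λ_k` is a uniformly random `ℓ_k`-subset of the interval
`[z_k, z_k + N_k] ⊆ ℤ`, the subsets are independent, the gaps between consecutive
intervals are increasing and unbounded, and `Σ_k ℓ_k²·N_{k−1}/N_k < ∞`, then almost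
surely `Λ = ⋃_k Λ_k` meets each of its nontrivial translates in a finite set. -/
theorem random_subsets_almost_surely_tset {Ω : Type*} [MeasurableSpace Ω]
    (P : Measure Ω) [IsProbabilityMeasure P]
    (z : ℕ → ℤ) (N ℓ : ℕ → ℕ) (hN : ∀ k, 0 < N k)
    (hgap_mono : Monotone fun k => z (k + 1) - (z k + (N k : ℤ)))
    (hgap_unbdd : ∀ M : ℤ, ∃ k, M < z (k + 1) - (z k + (N k : ℤ)))
    (Λ : ℕ → Ω → Finset ℤ)
    (hrange : ∀ k (ω : Ω), Λ k ω ⊆ Finset.Icc (z k) (z k + (N k : ℤ)) ∧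
      (Λ k ω).card = ℓ k)
    (hunif : ∀ k (s : Finset ℤ), s ⊆ Finset.Icc (z k) (z k + (N k : ℤ)) →
      s.card = ℓ k → P {ω | Λ k ω = s} = ((N k + 1).choose (ℓ k) : ℝ≥0∞)⁻¹)
    (hindep : iIndepFun (m := fun _ : ℕ => (⊤ : MeasurableSpace (Finset ℤ))) Λ P)
    (hsum : Summable fun k : ℕ => ((ℓ k : ℝ)) ^ 2 * (N (k - 1) : ℝ) / (N k : ℝ)) :
    ∀ᵐ ω ∂P, ∀ t₀ : ℤ, t₀ ≠ 0 →
      ((⋃ k, ((Λ k ω : Finset ℤ) : Set ℤ)) ∩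
        ((· + t₀) '' ⋃ k, ((Λ k ω : Finset ℤ) : Set ℤ))).Finite :=
  random_subsets_almost_surely_tset_general P z N ℓ hN hgap_mono hgap_unbdd Λ hrange hunif hsum
end
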